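/- arXiv:math/9405208 — 2 statements merged into one kernel-verified Lean document; each statement's English description precedes it below -/
import Mathlib

section
/- For every r.e. set A ⊆ ℕ there is a constant c such that C(χ_A ↾ n) ≤ 2·log n + c for all n, where χ_A ↾ n is the string χ_A(0)…χ_A(n). -/
/-- Binary strings. -/
abbrev Str : Type := List Bool

/-- An interpreter: takes a program and an input string, and possibly returns an
output in `{0,1}* ∪ {⊥}` (`none` is the "don't know" answer `⊥`). -/
abbrev Interp : Type := Str → Str →. Option Str

/-- `λ z. U p z` is a total function. -/
def TotalProg (U : Interp) (p : Str) : Prop := ∀ z : Str, (U p z).Dom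

/-- The output `o` correctly computes `χ_A z` (coding the bit `b` as the string `[b]`). -/
def Agrees (A : Set Str) (z : Str) (o : Option Str) : Prop :=
  (z ∈ A ∧ o = some [true]) ∨ (z ∉ A ∧ o = some [false])

/-- `λ z. U p z` is an `A`-consistent function: every output is `⊥` or `χ_A` of the input. -/
def Consistent (U : Interp) (A : Set Str) (p : Str) : Prop :=
  ∀ z o, o ∈ U p z → o = none ∨ Agrees A z o

/-- Kolmogorov complexity of `x` w.r.t. the interpreter `U` (`⊤` if undefined). -/
noncomputable def KC (U : Interp) (x : Str) : ℕ∞ :=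
  sInf ((fun p : Str => (p.length : ℕ∞)) '' {p | some x ∈ U p []})

/-- Instance complexity of `x` w.r.t. `A` in `U`. -/
noncomputable def ic (U : Interp) (A : Set Str) (x : Str) : ℕ∞ :=
  sInf ((fun p : Str => (p.length : ℕ∞)) ''
    {p | TotalProg U p ∧ Consistent U A p ∧ ∃ o, o ∈ U p x ∧ Agrees A x o})

/-- Weak instance complexity of `x` w.r.t. `A` in `U` (totality is dropped). -/
noncomputable def icw (U : Interp) (A : Set Str) (x : Str) : ℕ∞ :=
  sInf ((fun p : Str => (p.length : ℕ∞)) ''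
    {p | Consistent U A p ∧ ∃ o, o ∈ U p x ∧ Agrees A x o})

/-- `U` is an optimal partial recursive interpreter: it is partial recursive and
simulates every partial recursive interpreter with constant overhead, for `C`,
`ic` and the weak instance complexity. -/
def Optimal (U : Interp) : Prop :=
  Partrec₂ U ∧
    ∀ U' : Interp, Partrec₂ U' → ∃ c : ℕ,
      (∀ x, KC U x ≤ KC U' x + c) ∧
      (∀ A x, ic U A x ≤ ic U' A x + c) ∧
      (∀ A x, icw U A x ≤ icw U' A x + c)

/-- A set is recursively enumerable. -/
def REset {α : Type} [Primcodable α] (A : Set α) : Prop := REPred (· ∈ A)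

/-- A set is recursive (decidable). -/
def Recursive {α : Type} [Primcodable α] (A : Set α) : Prop := ComputablePred (· ∈ A)

/-- The initial segment `χ_A(0)…χ_A(n)` of the characteristic sequence of `A ⊆ ℕ`. -/
noncomputable def seg (A : Set ℕ) (n : ℕ) : Str :=
  (List.range (n + 1)).map fun i => @decide (i ∈ A) (Classical.propDecidable _)

/-- Apply `f : ℕ → ℕ` to an extended natural (sending `⊤` to `⊤`). -/
noncomputable def emap (f : ℕ → ℕ) (n : ℕ∞) : ℕ∞ :=
  if n = ⊤ then ⊤ else (f n.toNat : ℕ∞)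

/-- The canonical correspondence `ℕ → {0,1}*` (the binary expansion of `n+1`
with the leading bit removed). -/
def natToStr (n : ℕ) : Str := (Nat.bits (n + 1)).dropLast

/-- The string `χ_A(x_0)…χ_A(x_{n-1})` for the first `n` strings `x_0, x_1, …` in
canonical order, for `A ⊆ {0,1}*`. -/
noncomputable def segS (A : Set Str) (n : ℕ) : Str :=
  (List.range n).map fun i => @decide (natToStr i ∈ A) (Classical.propDecidable _)

/-- The `e`-th r.e. set of strings. -/
def W (e : ℕ) : Set Str :=
  {x | ((Denumerable.ofNat Nat.Partrec.Code e).eval (Encodable.encode x)).Dom}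

/-- The halting set. -/
def Khalt : Set ℕ := {e | ((Denumerable.ofNat Nat.Partrec.Code e).eval e).Dom}

/-!
If `A` is r.e., the bits `χ_A(0) … χ_A(n)` are determined by `n` together with the number `m`
of elements of `A` that are `≤ n`: enumerate `A` by stages until `m` elements `≤ n` have
appeared. Since stage approximations never contain elements outside `A`, at that stage they
are exactly `A ∩ [0, n]`. The pair `⟨n, m⟩` with `m ≤ n + 1` is a number below `(n + 2)²`,
hence has a binary description of length `2 log n + O(1)`, and optimality of `U` transfers
this bound to `C`.
-/

def strToNat (s : Str) : ℕ := (s ++ [true]).foldr Nat.bit 0 - 1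

theorem foldr_bit_bits (m : ℕ) : m.bits.foldr Nat.bit 0 = m := by
  induction m using Nat.binaryRec' with
  | zero => simp
  | bit b n h ih => rw [Nat.bits_append_bit n b h, List.foldr_cons, ih]

theorem dropLast_bits_append_true {m : ℕ} (hm : m ≠ 0) :
    m.bits.dropLast ++ [true] = m.bits := by
  have hne : m.bits ≠ [] := by
    simpa [Nat.digits_two_eq_bits] using (Nat.digits_ne_nil_iff_ne_zero (b := 2)).2 hm
  have hlast : m.bits.getLast hne = true := by
    have := Nat.getLast_digit_ne_zero 2 hm
    simp only [Nat.digits_two_eq_bits, List.getLast_map] at this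
    revert this
    cases m.bits.getLast hne <;> simp
  conv_rhs => rw [← List.dropLast_append_getLast hne, hlast]

theorem strToNat_natToStr (n : ℕ) : strToNat (natToStr n) = n := by
  rw [strToNat, natToStr, dropLast_bits_append_true n.succ_ne_zero, foldr_bit_bits]
  rfl

theorem primrec_strToNat : Primrec strToNat := by
  have hbit : Primrec₂ Nat.bit :=
    (Primrec.nat_add.comp (Primrec.nat_double.comp Primrec.snd)
      ((Primrec.dom_bool Bool.toNat).comp Primrec.fst)).of_eq fun p => (Nat.bit_val p.1 p.2).symm
  exact Primrec.pred.comp <| Primrec.list_foldr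
    (Primrec.list_concat.comp Primrec.id (Primrec.const true)) (Primrec.const 0)
    (hbit.comp (Primrec.fst.comp Primrec.snd) (Primrec.snd.comp Primrec.snd)).to₂

theorem length_natToStr_le_of_lt_two_pow {k b : ℕ} (h : k < 2 ^ b) :
    (natToStr k).length ≤ b := by
  have : (k + 1).size ≤ b + 1 := Nat.size_le.2 (by rw [pow_succ]; omega)
  rw [natToStr, List.length_dropLast, Nat.size_eq_bits_len]
  omega

theorem pair_lt_two_pow_two_mul_log_add_four {n m : ℕ} (hm : m ≤ n + 1) :
    Nat.pair n m < 2 ^ (2 * Nat.log 2 n + 4) := by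
  have hn : n + 2 ≤ 2 ^ (Nat.log 2 n + 2) := by
    have := Nat.lt_pow_succ_log_self one_lt_two n
    rw [pow_succ, pow_succ] at *
    omega
  calc Nat.pair n m < (max n m + 1) ^ 2 := Nat.pair_lt_max_add_one_sq n m
    _ ≤ (n + 2) ^ 2 := Nat.pow_le_pow_left (by omega) 2
    _ ≤ (2 ^ (Nat.log 2 n + 2)) ^ 2 := Nat.pow_le_pow_left hn 2
    _ = 2 ^ (2 * Nat.log 2 n + 4) := by ring

theorem Optimal.exists_KC_le_length_natToStr {U : Interp} (hU : Optimal U) {d : ℕ →. Str}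
    (hd : Partrec d) : ∃ c : ℕ, ∀ k x, x ∈ d k → KC U x ≤ (natToStr k).length + c := by
  let V : Interp := fun p _ => (d (strToNat p)).map some
  have hV : Partrec₂ V :=
    (hd.comp (primrec_strToNat.comp Primrec.fst).to_comp).map
      (Computable.option_some.comp Computable.snd).to₂
  obtain ⟨c, hKC, -⟩ := hU.2 V hV
  refine ⟨c, fun k x hx => (hKC x).trans (add_le_add_left ?_ _)⟩
  have hmem : some x ∈ V (natToStr k) [] := by
    show some x ∈ (d (strToNat (natToStr k))).map some
    rw [strToNat_natToStr]
    exact Part.mem_map _ hx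
  exact sInf_le ⟨natToStr k, hmem, rfl⟩

theorem List.forall_mem_eq_of_countP_eq {α : Type*} {l : List α} {p q : α → Bool}
    (hpq : ∀ a ∈ l, p a → q a) (hc : l.countP p = l.countP q) : ∀ a ∈ l, p a = q a := by
  have hand : l.countP (fun a => p a && q a) = l.countP q := by
    rw [← hc]
    exact List.countP_congr fun a ha => by cases hpa : p a <;> simp [hpa, hpq a ha]
  have heq : l.filter (fun a => p a && q a) = l.filter q :=
    (l.monotone_filter_right fun _ h => (Bool.and_eq_true_iff.1 h).2).eq_of_length
      (by simpa [List.countP_eq_length_filter] using hand)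
  intro a ha
  cases hqa : q a
  · exact Bool.eq_false_iff.2 fun hpa => by simpa [hqa] using hpq a ha hpa
  · have : a ∈ l.filter (fun a => p a && q a) := heq ▸ List.mem_filter.2 ⟨ha, hqa⟩
    exact (Bool.and_eq_true_iff.1 (List.mem_filter.1 this).2).1

theorem List.count_true_map {α : Type*} (l : List α) (f : α → Bool) :
    (l.map f).count true = l.countP f := by
  rw [List.count_eq_countP, List.countP_map]
  exact List.countP_congr fun _ _ => by simp

theorem primrec_count_true : Primrec fun l : Str => l.count true :=
  (Primrec.list_length.comp (Primrec.listFilter (p := fun b : Bool => b = true)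
    (Primrec.eq.comp Primrec.id (Primrec.const true)))).of_eq fun l => by
      simp [List.count_eq_length_filter]

section StageApproximation

variable (e : ℕ → ℕ → Bool)

def stageSeg (s n : ℕ) : Str := (List.range (n + 1)).map (e s)

def segDecoder (k : ℕ) : Part Str :=
  (Nat.rfind fun s => Part.some ((stageSeg e s k.unpair.1).count true = k.unpair.2)).map
    fun s => stageSeg e s k.unpair.1

theorem partrec_segDecoder (he : Primrec₂ e) : Partrec (segDecoder e) := by
  have hstage : Primrec₂ (stageSeg e) :=
    Primrec.list_map (Primrec.list_range.comp (Primrec.succ.comp Primrec.snd))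
      (he.comp (Primrec.fst.comp Primrec.fst) Primrec.snd).to₂
  have hn : Primrec fun k : ℕ => k.unpair.1 := Primrec.fst.comp Primrec.unpair
  have hm : Primrec fun k : ℕ => k.unpair.2 := Primrec.snd.comp Primrec.unpair
  have hfound :
      Primrec₂ fun k s : ℕ => decide ((stageSeg e s k.unpair.1).count true = k.unpair.2) :=
    Primrec.to₂ <| Primrec.eq.decide.comp
      (primrec_count_true.comp (hstage.comp Primrec.snd (hn.comp Primrec.fst)))
      (hm.comp Primrec.fst)
  exact (Partrec.rfind hfound.to_comp.partrec₂).map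
    (hstage.comp Primrec.snd (hn.comp Primrec.fst)).to_comp.to₂

variable {e}

theorem exists_stageSeg_eq_seg {A : Set ℕ} (hmono : Monotone e)
    (hA : ∀ i, i ∈ A ↔ ∃ s, e s i = true) (n : ℕ) : ∃ S, stageSeg e S n = seg A n := by
  classical
  have hstage : ∀ i, ∃ s, i ∈ A → e s i = true := fun i => by
    by_cases hi : i ∈ A
    · exact ((hA i).1 hi).imp fun _ h _ => h
    · exact ⟨0, fun h => absurd h hi⟩
  choose f hf using hstage
  refine ⟨(Finset.range (n + 1)).sup f, List.map_congr_left fun i hi => ?_⟩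
  by_cases hiA : i ∈ A
  · have hle : f i ≤ (Finset.range (n + 1)).sup f :=
      Finset.le_sup (Finset.mem_range.2 (List.mem_range.1 hi))
    simpa [hiA] using le_antisymm (Bool.le_true _) (hf i hiA ▸ hmono hle i)
  · simpa [hiA] using mt (fun h => (hA i).2 ⟨_, h⟩) hiA

theorem seg_mem_segDecoder {A : Set ℕ} (hmono : Monotone e)
    (hA : ∀ i, i ∈ A ↔ ∃ s, e s i = true) (n : ℕ) :
    seg A n ∈ segDecoder e (Nat.pair n ((seg A n).count true)) := by
  classical
  obtain ⟨S, hS⟩ := exists_stageSeg_eq_seg hmono hA n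
  set q : ℕ →. Bool :=
    fun s => Part.some (decide ((stageSeg e s n).count true = (seg A n).count true))
  have hdom : (Nat.rfind q).Dom := Nat.rfind_dom'.2 ⟨S, by simp [q, hS], fun _ => trivial⟩
  obtain ⟨s₀, hs₀⟩ : ∃ s₀, s₀ ∈ Nat.rfind q := ⟨_, Part.get_mem hdom⟩
  have hcount := Nat.rfind_spec hs₀
  simp only [q, Part.mem_some_iff, stageSeg, seg, List.count_true_map] at hcount
  have hseg : stageSeg e s₀ n = seg A n :=
    List.map_congr_left <| List.forall_mem_eq_of_countP_eq
      (fun i _ h => decide_eq_true ((hA i).2 ⟨_, h⟩)) (of_decide_eq_true hcount.symm)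
  rw [segDecoder, Nat.unpair_pair, Part.mem_map_iff]
  exact ⟨_, hs₀, hseg⟩

end StageApproximation

open Nat.Partrec (Code) in
theorem REset.exists_code {A : Set ℕ} (hA : REset A) :
    ∃ c : Code, ∀ i, i ∈ A ↔ (c.eval i).Dom := by
  have hf : Partrec fun i : ℕ => (Part.assert (i ∈ A) fun _ => Part.some ()).map fun _ => 0 :=
    Partrec.map hA (Computable.const 0).to₂
  obtain ⟨c, hc⟩ := Nat.Partrec.Code.exists_code.1 (Partrec.nat_iff.1 hf)
  exact ⟨c, fun i => by simpa [hc] using ⟨fun h => ⟨h, trivial⟩, fun h => h.1⟩⟩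

theorem REset.exists_stages {A : Set ℕ} (hA : REset A) : ∃ e : ℕ → ℕ → Bool,
    Primrec₂ e ∧ Monotone e ∧ ∀ i, i ∈ A ↔ ∃ s, e s i = true := by
  obtain ⟨c, hc⟩ := hA.exists_code
  refine ⟨fun s i => (c.evaln s i).isSome, ?_, fun s t hst i => ?_, fun i => ?_⟩
  · exact (Primrec.option_isSome.comp (Nat.Partrec.Code.primrec_evaln.comp
      ((Primrec.fst.pair (Primrec.const c)).pair Primrec.snd))).to₂
  · show (c.evaln s i).isSome ≤ (c.evaln t i).isSome
    cases h : c.evaln s i with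
    | none => exact Bool.false_le _
    | some x => rw [Option.mem_def.1 (Nat.Partrec.Code.evaln_mono hst h)]
  · simp only [hc, Part.dom_iff_mem, Option.isSome_iff_exists, Nat.Partrec.Code.evaln_complete]
    exact exists_comm

theorem stmt4 (U : Interp) (hU : Optimal U) (A : Set ℕ) (hA : REset A) :
    ∃ c : ℕ, ∀ n : ℕ, KC U (seg A n) ≤ ((2 * Nat.log 2 n + c : ℕ) : ℕ∞) := by
  obtain ⟨e, he, hmono, hAe⟩ := hA.exists_stages
  obtain ⟨c, hc⟩ := hU.exists_KC_le_length_natToStr (partrec_segDecoder e he)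
  refine ⟨4 + c, fun n => ?_⟩
  have hcount : (seg A n).count true ≤ n + 1 := by
    simpa [seg] using List.count_le_length (a := true) (l := seg A n)
  have hlen := length_natToStr_le_of_lt_two_pow (pair_lt_two_pow_two_mul_log_add_four hcount)
  calc KC U (seg A n) ≤ (natToStr (Nat.pair n ((seg A n).count true))).length + c :=
        hc _ _ (seg_mem_segDecoder hmono hAe n)
    _ ≤ ((2 * Nat.log 2 n + (4 + c) : ℕ) : ℕ∞) := by
        rw [← add_assoc]; push_cast; gcongr; exact_mod_cast hlen
end

section
/- There exists a recursively enumerable set A ⊆ ℕ and a constant c such that C(χ_A ↾ n) ≥ 2·log n − c for infinitely many n. (That is, there is an r.e. complex set, showing the 2 log n upper bound on initial-segment Kolmogorov complexity of r.e. sets is optimal.) -/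
theorem PrimrecRel.rePred_exists {α : Type*} [Primcodable α] {R : α → ℕ → Prop}
    (hR : PrimrecRel R) : REPred fun a => ∃ n, R a n := by
  classical
  have hsearch : Partrec fun a => Nat.rfind fun n => Part.some (decide (R a n)) :=
    Partrec.rfind hR.decide.to_comp.partrec₂
  exact hsearch.dom_re.of_eq fun a => Nat.rfind_dom.trans (by simp)

namespace ComplexRESet

open Nat.Partrec (Code)
open Nat.Partrec.Code Encodable Filter

theorem exists_eq_and_succ_eq_of_lt {g : ℕ → ℕ} (hg : ∀ s, g (s + 1) ≤ g s + 1) {t s : ℕ}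
    (h0 : g 0 ≤ t) (hts : t < g s) : ∃ r, g r = t ∧ g (r + 1) = t + 1 := by
  induction s with
  | zero => omega
  | succ s ih =>
    by_cases hs : t < g s
    · exact ih hs
    · exact ⟨s, by have := hg s; omega, by have := hg s; omega⟩

theorem sum_range_succ_id_mul_two (m : ℕ) :
    (∑ i ∈ Finset.range m, (i + 1)) * 2 = (m + 1) * m := by
  have h := Finset.sum_range_id_mul_two (m + 1)
  rwa [Finset.sum_range_succ', add_zero, Nat.add_sub_cancel] at h

theorem KC_lt_iff {U : Interp} {x : Str} {L : ℕ} :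
    KC U x < L ↔ ∃ p : Str, p.length < L ∧ some x ∈ U p [] := by
  simp only [KC, sInf_lt_iff, Set.mem_image, Set.mem_ofPred_eq]
  constructor
  · rintro ⟨_, ⟨p, hp, rfl⟩, hlt⟩
    exact ⟨p, by exact_mod_cast hlt, hp⟩
  · rintro ⟨p, hlt, hp⟩
    exact ⟨_, ⟨p, hp, rfl⟩, by exact_mod_cast hlt⟩

def strsLt : ℕ → List Str
  | 0 => []
  | L + 1 => [] :: (strsLt L).flatMap fun p => [false :: p, true :: p]

theorem mem_strsLt {L : ℕ} {p : Str} : p ∈ strsLt L ↔ p.length < L := by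
  induction L generalizing p with
  | zero => simp [strsLt]
  | succ L ih =>
    cases p with
    | nil => simp [strsLt]
    | cons b q => cases b <;> simp [strsLt, ih]

theorem length_strsLt (L : ℕ) : (strsLt L).length = 2 ^ L - 1 := by
  induction L with
  | zero => rfl
  | succ L ih =>
    have hpos := Nat.one_le_two_pow (n := L)
    simp only [strsLt, List.length_cons, List.length_flatMap, List.length_nil,
      List.map_const', List.sum_replicate, smul_eq_mul, ih, pow_succ]
    omega

theorem card_lt_of_forall_KC_lt {U : Interp} {L : ℕ} (T : Finset Str)
    (hT : ∀ x ∈ T, KC U x < L) : T.card < 2 ^ L := by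
  choose! prog hprog using fun x hx => KC_lt_iff.1 (hT x hx)
  have hinj : Set.InjOn prog T := fun x hx y hy hxy =>
    Option.some_injective _ (Part.mem_unique (hprog x hx).2 (hxy ▸ (hprog y hy).2))
  calc T.card ≤ (strsLt L).toFinset.card :=
        Finset.card_le_card_of_injOn prog
          (fun x hx => List.mem_toFinset.2 (mem_strsLt.2 (hprog x hx).1)) hinj
    _ ≤ (strsLt L).length := List.toFinset_card_le _
    _ < 2 ^ L := by rw [length_strsLt]; exact Nat.sub_lt (Nat.two_pow_pos L) one_pos

def Simulates (e : Code) (U : Interp) : Prop :=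
  ∀ p : Str, eval e (encode p) = (U p []).map encode

theorem exists_simulates {U : Interp} (hU : Partrec₂ U) : ∃ e : Code, Simulates e U := by
  obtain ⟨e, he⟩ := exists_code.1 (hU.comp Computable.id (Computable.const ([] : Str)))
  exact ⟨e, fun p => by simp [he, encodek]⟩

section Construction

variable (e : Code)

def Covered (s L : ℕ) (σ : Str) : Prop :=
  ∃ p ∈ strsLt L, evaln s e (encode p) = some (encode (some σ))

instance (s L : ℕ) (σ : Str) : Decidable (Covered e s L σ) :=
  inferInstanceAs (Decidable (∃ p ∈ strsLt L, _))

-- The clause `x < 2 ^ (k + 1)` keeps the blocks disjoint whatever the counters `J`.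
def ApproxMem (J : List ℕ) (x : ℕ) : Prop :=
  ∃ k < x, 2 ^ k ≤ x ∧ x < 2 ^ (k + 1) ∧ x < 2 ^ k + J.getD k 0

instance (J : List ℕ) (x : ℕ) : Decidable (ApproxMem J x) :=
  inferInstanceAs (Decidable (∃ k < x, _))

def approxSeg (J : List ℕ) (n : ℕ) : Str :=
  (List.range (n + 1)).map fun x => decide (ApproxMem J x)

def Fires (s : ℕ) (J : List ℕ) (k : ℕ) : Prop :=
  J.getD k 0 < 2 ^ k ∧ ∀ i < 2 ^ k, Covered e s (2 * k - 1) (approxSeg J (2 ^ k + i))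

instance (s : ℕ) (J : List ℕ) (k : ℕ) : Decidable (Fires e s J k) :=
  inferInstanceAs (Decidable (_ ∧ ∀ i < 2 ^ k, _))

def step (s : ℕ) (J : List ℕ) : List ℕ :=
  (List.range (J.length + 1)).map fun k => if Fires e s J k then J.getD k 0 + 1 else J.getD k 0

def stage : ℕ → List ℕ
  | 0 => []
  | s + 1 => step e s (stage s)

def counter (s k : ℕ) : ℕ := (stage e s).getD k 0

def complexSet : Set ℕ := {x | ∃ s, ApproxMem (stage e s) x}

variable {e}

theorem length_stage (s : ℕ) : (stage e s).length = s := by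
  induction s with
  | zero => rfl
  | succ s ih => simp [stage, step, ih]

theorem counter_succ (s k : ℕ) : counter e (s + 1) k =
    if k ≤ s ∧ Fires e s (stage e s) k then counter e s k + 1 else counter e s k := by
  by_cases hks : k ≤ s
  · simp [counter, stage, step, length_stage, hks]
  · have hout : ∀ s', s' ≤ s + 1 → counter e s' k = 0 := fun s' hs' =>
      List.getD_eq_default _ _ (by rw [length_stage]; omega)
    simp [hout s (by omega), hout (s + 1) le_rfl, hks]

theorem counter_le_succ (s k : ℕ) : counter e s k ≤ counter e (s + 1) k := by
  rw [counter_succ]; split_ifs <;> omega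

theorem counter_succ_le (s k : ℕ) : counter e (s + 1) k ≤ counter e s k + 1 := by
  rw [counter_succ]; split_ifs <;> omega

theorem counter_mono (k : ℕ) : Monotone (counter e · k) :=
  monotone_nat_of_le_succ fun s => counter_le_succ s k

theorem approxMem_stage_mono {s s' x : ℕ} (hs : s ≤ s') (h : ApproxMem (stage e s) x) :
    ApproxMem (stage e s') x := by
  obtain ⟨k, hkx, hlo, hhi, hx⟩ := h
  exact ⟨k, hkx, hlo, hhi, hx.trans_le (Nat.add_le_add_left (counter_mono (e := e) k hs) _)⟩

theorem approxMem_two_pow_add {J : List ℕ} {k u : ℕ} (hu : u < 2 ^ k) :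
    ApproxMem J (2 ^ k + u) ↔ u < J.getD k 0 := by
  constructor
  · rintro ⟨k', -, hlo, hhi, hx⟩
    have hk' := Nat.log_eq_of_pow_le_of_lt_pow hlo hhi
    have hk := Nat.log_eq_of_pow_le_of_lt_pow (b := 2) (m := k) (n := 2 ^ k + u) (by omega)
      (by rw [pow_succ]; omega)
    obtain rfl : k' = k := hk'.symm.trans hk
    omega
  · intro h
    have := @Nat.lt_two_pow_self k
    exact ⟨k, by omega, by omega, by rw [pow_succ]; omega, by omega⟩

theorem covered_mono {s s' L : ℕ} {σ : Str} (hs : s ≤ s') (h : Covered e s L σ) :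
    Covered e s' L σ := by
  obtain ⟨p, hp, hev⟩ := h
  exact ⟨p, hp, evaln_mono hs hev⟩

theorem getD_le_of_approxSeg_eq {J J' : List ℕ} {k n : ℕ} (h : approxSeg J n = approxSeg J' n)
    (hJ : J.getD k 0 < 2 ^ k) (hn : 2 ^ k + J.getD k 0 ≤ n) : J'.getD k 0 ≤ J.getD k 0 := by
  have hbit := congrArg (·[2 ^ k + J.getD k 0]?) h
  simp only [approxSeg, List.getElem?_map, List.getElem?_range (Nat.lt_succ_of_le hn),
    Option.map_some, Option.some.injEq, decide_eq_decide, approxMem_two_pow_add hJ] at hbit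
  exact not_lt.1 fun hlt => lt_irrefl _ (hbit.2 hlt)

theorem exists_covered_iff {U : Interp} (he : Simulates e U) {L : ℕ} {σ : Str} :
    (∃ s, Covered e s L σ) ↔ KC U σ < L := by
  have hout (p : Str) :
      (∃ s, evaln s e (encode p) = some (encode (some σ))) ↔ some σ ∈ U p [] := by
    simp only [← Option.mem_def]
    rw [← evaln_complete, he, Part.mem_map_iff]
    exact ⟨fun ⟨o, ho, heq⟩ => encode_injective heq ▸ ho, fun h => ⟨_, h, rfl⟩⟩
  simp only [KC_lt_iff, Covered, ← hout, mem_strsLt]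
  exact ⟨fun ⟨s, p, hp, hev⟩ => ⟨p, hp, s, hev⟩, fun ⟨p, hp, s, hev⟩ => ⟨s, p, hp, hev⟩⟩

theorem eventually_approxSeg_eq_seg (n : ℕ) :
    ∀ᶠ s in atTop, approxSeg (stage e s) n = seg (complexSet e) n := by
  have hmem : ∀ x ∈ Set.Iio (n + 1),
      ∀ᶠ s in atTop, (ApproxMem (stage e s) x ↔ x ∈ complexSet e) := by
    intro x _
    by_cases hx : x ∈ complexSet e
    · obtain ⟨s₀, hs₀⟩ := hx
      filter_upwards [eventually_ge_atTop s₀] with s hs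
      exact iff_of_true (approxMem_stage_mono hs hs₀) ⟨s₀, hs₀⟩
    · exact Eventually.of_forall fun s => iff_of_false (fun h => hx ⟨s, h⟩) hx
  filter_upwards [(Set.finite_Iio _).eventually_all.2 hmem] with s hs
  exact List.map_congr_left fun x hx => decide_eq_decide.2 (hs x (by simpa using hx))

theorem eq_of_approxSeg_eq {J J' : List ℕ} {k i i' : ℕ}
    (h : approxSeg J (2 ^ k + i) = approxSeg J' (2 ^ k + i')) (hi : i < 2 ^ k) (hi' : i' < 2 ^ k)
    (hJ : J.getD k 0 ≤ i) (hJ' : J'.getD k 0 ≤ i') : i = i' ∧ J.getD k 0 = J'.getD k 0 := by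
  obtain rfl : i = i' := by simpa [approxSeg] using congrArg List.length h
  have h₁ := getD_le_of_approxSeg_eq h (k := k) (by omega) (by omega)
  have h₂ := getD_le_of_approxSeg_eq h.symm (k := k) (by omega) (by omega)
  exact ⟨rfl, by omega⟩

theorem exists_counter_eq_and_fires {s k t : ℕ} (ht : t < counter e s k) :
    ∃ r, counter e r k = t ∧ Fires e r (stage e r) k := by
  obtain ⟨r, hr, hr₁⟩ := exists_eq_and_succ_eq_of_lt (g := (counter e · k))
    (counter_succ_le · k) (Nat.zero_le t) ht
  rw [counter_succ] at hr₁
  split_ifs at hr₁ with hf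
  · exact ⟨r, hr, hf.2⟩
  · omega

theorem counter_lt_two_pow {U : Interp} (he : Simulates e U) {k : ℕ} (hk : 1 ≤ k) (s : ℕ) :
    counter e s k < 2 ^ k := by
  by_contra! hs
  choose! r hr hfires using fun t (ht : t < 2 ^ k) => exists_counter_eq_and_fires (ht.trans_le hs)
  -- `σ ⟨i, t⟩` is the `i`-th segment that had to be described before counter `k` left `t`
  let D := (Finset.range (2 ^ k)).sigma fun i => Finset.range (i + 1)
  let σ : (Σ _ : ℕ, ℕ) → Str := fun q => approxSeg (stage e (r q.2)) (2 ^ k + q.1)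
  have hinj : Set.InjOn σ D := by
    rintro ⟨i, t⟩ hq ⟨i', t'⟩ hq' heq
    simp only [D, Finset.coe_sigma, Set.mem_sigma_iff, Finset.coe_range, Set.mem_Iio] at hq hq'
    have ht := hr t (by omega)
    have ht' := hr t' (by omega)
    unfold counter at ht ht'
    change approxSeg (stage e (r t)) (2 ^ k + i) = approxSeg (stage e (r t')) (2 ^ k + i') at heq
    obtain ⟨rfl, htt'⟩ := eq_of_approxSeg_eq heq hq.1 hq'.1 (by omega) (by omega)
    simp only [Sigma.mk.injEq, heq_eq_eq, true_and]
    omega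
  have hshort : ∀ x ∈ D.image σ, KC U x < (2 * k - 1 : ℕ) := by
    intro x hx
    obtain ⟨⟨i, t⟩, hq, rfl⟩ := Finset.mem_image.1 hx
    simp only [D, Finset.mem_sigma, Finset.mem_range] at hq
    exact (exists_covered_iff he).1 ⟨_, (hfires t (by omega)).2 i hq.1⟩
  have hcard := card_lt_of_forall_KC_lt _ hshort
  rw [Finset.card_image_of_injOn hinj, Finset.card_sigma] at hcard
  simp only [Finset.card_range] at hcard
  have hsum := sum_range_succ_id_mul_two (2 ^ k)
  have hpow : 2 ^ (2 * k - 1) * 2 = 2 ^ k * 2 ^ k := by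
    rw [← pow_succ, ← pow_add]; congr 1; omega
  have hlt : (2 ^ k + 1) * 2 ^ k < 2 ^ k * 2 ^ k := by rw [← hsum, ← hpow]; omega
  exact hlt.not_ge (Nat.mul_le_mul_right _ (Nat.le_succ _))

theorem exists_le_KC_seg {U : Interp} (he : Simulates e U) {k : ℕ} (hk : 1 ≤ k) :
    ∃ n, 2 ^ k ≤ n ∧ n < 2 ^ (k + 1) ∧
      ((2 * k - 1 : ℕ) : ℕ∞) ≤ KC U (seg (complexSet e) n) := by
  obtain ⟨c, hc⟩ : ∃ c, ∀ᶠ s in atTop, counter e s k = c :=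
    ⟨_, tendsto_pure.1 (by
      simpa [nhds_discrete] using tendsto_atTop_ciSup (counter_mono k)
        ⟨2 ^ k, by rintro _ ⟨s, rfl⟩; exact (counter_lt_two_pow he hk s).le⟩)⟩
  by_contra! hlow
  have hcov : ∀ i ∈ Set.Iio (2 ^ k), ∀ᶠ s in atTop,
      Covered e s (2 * k - 1) (approxSeg (stage e s) (2 ^ k + i)) := by
    intro i hi
    rw [Set.mem_Iio] at hi
    obtain ⟨s₀, hs₀⟩ :=
      (exists_covered_iff he).2 (hlow (2 ^ k + i) (by omega) (by rw [pow_succ]; omega))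
    filter_upwards [eventually_ge_atTop s₀, eventually_approxSeg_eq_seg (e := e) (2 ^ k + i)]
      with s hs hseg
    rw [hseg]
    exact covered_mono hs hs₀
  obtain ⟨s, ⟨⟨hks, hcs⟩, hcs'⟩, hcovs⟩ := ((((eventually_ge_atTop k).and hc).and
    ((tendsto_add_atTop_nat 1).eventually hc)).and
      ((Set.finite_Iio _).eventually_all.2 hcov)).exists
  have hfires : Fires e s (stage e s) k := ⟨counter_lt_two_pow he hk s, hcovs⟩
  have hstep : counter e (s + 1) k = counter e s k + 1 := by
    rw [counter_succ, if_pos ⟨hks, hfires⟩]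
  omega

end Construction

section Computability

open Primrec

theorem primrec_two_pow : Primrec fun k : ℕ => 2 ^ k :=
  (Primrec₂.unpaired'.1 Nat.Primrec.pow).comp (const 2) Primrec.id

theorem primrec_strsLt : Primrec strsLt := by
  have hbranch : Primrec₂ fun (_ : ℕ × List Str) (p : Str) => [false :: p, true :: p] :=
    (list_cons.comp (list_cons.comp (const false) snd)
      (list_cons.comp (list_cons.comp (const true) snd) (const []))).to₂
  have hstep : Primrec₂ fun (_ : ℕ) (l : List Str) =>
      [] :: l.flatMap fun p => [false :: p, true :: p] :=
    (list_cons.comp (const []) (list_flatMap snd hbranch)).to₂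
  refine (nat_rec₁ [] hstep).of_eq fun L => ?_
  induction L with
  | zero => rfl
  | succ L ih => exact congrArg (fun l => [] :: l.flatMap fun p => [false :: p, true :: p]) ih

theorem primrecPred_covered (e : Code) :
    PrimrecPred fun q : (ℕ × ℕ) × Str => Covered e q.1.1 q.1.2 q.2 := by
  have hout : PrimrecRel fun (p : Str) (q : (ℕ × ℕ) × Str) =>
      evaln q.1.1 e (encode p) = some (encode (some q.2)) :=
    Primrec.eq.comp
      (primrec_evaln.comp
        (((fst.comp (fst.comp snd)).pair (const e)).pair (Primrec.encode.comp fst)))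
      (option_some.comp (Primrec.encode.comp (option_some.comp (snd.comp snd))))
  exact hout.exists_mem_list.comp (primrec_strsLt.comp (snd.comp fst)) Primrec.id

theorem primrecRel_approxMem : PrimrecRel ApproxMem := by
  have hk : PrimrecRel fun (k : ℕ) (q : List ℕ × ℕ) =>
      2 ^ k ≤ q.2 ∧ q.2 < 2 ^ (k + 1) ∧ q.2 < 2 ^ k + q.1.getD k 0 :=
    (nat_le.comp (primrec_two_pow.comp fst) (snd.comp snd)).and
      ((nat_lt.comp (snd.comp snd) (primrec_two_pow.comp (succ.comp fst))).and
        (nat_lt.comp (snd.comp snd)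
          (nat_add.comp (primrec_two_pow.comp fst) ((list_getD 0).comp (fst.comp snd) fst))))
  exact (hk.exists_mem_list.comp (list_range.comp snd) Primrec.id).of_eq fun q => by
    simp [ApproxMem]

theorem primrec_approxSeg : Primrec₂ approxSeg :=
  (list_map (list_range.comp (succ.comp snd))
    (primrecRel_approxMem.decide.comp (fst.comp fst) snd).to₂).to₂

theorem primrecPred_fires (e : Code) :
    PrimrecPred fun q : (ℕ × List ℕ) × ℕ => Fires e q.1.1 q.1.2 q.2 := by
  have hcov : PrimrecRel fun (i : ℕ) (q : (ℕ × List ℕ) × ℕ) =>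
      Covered e q.1.1 (2 * q.2 - 1) (approxSeg q.1.2 (2 ^ q.2 + i)) :=
    (primrecPred_covered e).comp
      (((fst.comp (fst.comp snd)).pair
        (nat_sub.comp (nat_mul.comp (const 2) (snd.comp snd)) (const 1))).pair
        (primrec_approxSeg.comp (snd.comp (fst.comp snd))
          (nat_add.comp (primrec_two_pow.comp (snd.comp snd)) fst)))
  refine ((nat_lt.comp ((list_getD 0).comp (snd.comp fst) snd) (primrec_two_pow.comp snd)).and
    (hcov.forall_mem_list.comp (list_range.comp (primrec_two_pow.comp snd)) Primrec.id)).of_eq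
    fun q => ?_
  simp [Fires]

theorem primrec_step (e : Code) : Primrec₂ (step e) :=
  (list_map (list_range.comp (succ.comp (list_length.comp snd)))
    (Primrec.ite (primrecPred_fires e)
      (succ.comp ((list_getD 0).comp (snd.comp fst) snd))
      ((list_getD 0).comp (snd.comp fst) snd)).to₂).to₂

theorem primrec_stage (e : Code) : Primrec (stage e) := by
  refine (nat_rec₁ [] (primrec_step e)).of_eq fun s => ?_
  induction s with
  | zero => rfl
  | succ s ih => exact congrArg (step e s) ih

theorem complexSet_re (e : Code) : REset (complexSet e) :=
  (primrecRel_approxMem.comp₂ ((primrec_stage e).comp₂ Primrec₂.right)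
    Primrec₂.left).rePred_exists

end Computability

end ComplexRESet

theorem stmt6 (U : Interp) (hU : Optimal U) :
    ∃ A : Set ℕ, REset A ∧
      ∃ c : ℕ, ∀ m : ℕ, ∃ n ≥ m, ((2 * Nat.log 2 n - c : ℕ) : ℕ∞) ≤ KC U (seg A n) := by
  obtain ⟨e, he⟩ := ComplexRESet.exists_simulates hU.1
  refine ⟨ComplexRESet.complexSet e, ComplexRESet.complexSet_re e, 1, fun m => ?_⟩
  obtain ⟨n, hlo, hhi, hKC⟩ := ComplexRESet.exists_le_KC_seg he (k := m + 1) (by omega)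
  refine ⟨n, ?_, ?_⟩
  · have := Nat.lt_two_pow_self (n := m + 1)
    omega
  · rwa [Nat.log_eq_of_pow_le_of_lt_pow hlo hhi]
end
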